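/- arXiv:2602.17637 — 5 statements merged into one kernel-verified Lean document; each statement's English description precedes it below -/
import Mathlib

section
/- Let S be a finite set of points in the real plane ℝ², not all lying on one line. Then there exists an ordinary line spanned by S, i.e., a line of the plane containing exactly two points of S. -/
/-!
Kelly's proof. Among all pairs of a point `p ∈ S` and a line through two points `a, b ∈ S`
missing `p`, choose one with `p` at minimal distance from the line. If the line contained a
third point of `S`, two of the three points `B, C` on it would lie on the same side of the foot
of the perpendicular from `p`, with `B` nearer to it; then `B` is strictly closer to the line
`pC` than `p` is to the line `ab`, contradicting minimality.
-/

/-- A line in the plane `ℝ × ℝ` is a one-dimensional affine subspace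
(viewed as a set of points). -/
def IsLine (L : Set (ℝ × ℝ)) : Prop :=
  ∃ ℓ : AffineSubspace ℝ (ℝ × ℝ), Module.finrank ℝ ℓ.direction = 1 ∧ L = (ℓ : Set (ℝ × ℝ))

namespace SylvesterGallai

def cross (u v : ℝ × ℝ) : ℝ := u.1 * v.2 - u.2 * v.1

def dot (u v : ℝ × ℝ) : ℝ := u.1 * v.1 + u.2 * v.2

/-- The squared distance from `p` to the line through `a` and `b`. -/
noncomputable def distSq (p a b : ℝ × ℝ) : ℝ := cross (b - a) (p - a) ^ 2 / dot (b - a) (b - a)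

lemma dot_self_pos {v : ℝ × ℝ} (hv : v ≠ 0) : 0 < dot v v := by
  have : v.1 ≠ 0 ∨ v.2 ≠ 0 := by
    by_contra! h
    exact hv (Prod.ext h.1 h.2)
  unfold dot
  rcases this with h | h <;> nlinarith [mul_self_pos.2 h, mul_self_nonneg v.1, mul_self_nonneg v.2]

lemma ne_zero_of_cross_ne_zero_left {u v : ℝ × ℝ} (h : cross u v ≠ 0) : u ≠ 0 := by
  rintro rfl
  simp [cross] at h

lemma cross_sq_add_dot_sq (u v : ℝ × ℝ) : cross u v ^ 2 + dot u v ^ 2 = dot u u * dot v v := by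
  unfold cross dot
  ring

lemma eq_smul_of_cross_eq_zero {u x : ℝ × ℝ} (hu : u ≠ 0) (h : cross u x = 0) :
    x = (dot u x / dot u u) • u := by
  have hN := (dot_self_pos hu).ne'
  unfold cross at h
  unfold dot at hN ⊢
  ext <;> simp only [Prod.smul_fst, Prod.smul_snd, smul_eq_mul] <;>
    rw [div_mul_eq_mul_div, eq_div_iff hN]
  · linear_combination (-u.2) * h
  · linear_combination u.1 * h

lemma exists_cross_ne_zero_of_not_collinear {S : Set (ℝ × ℝ)} (h : ¬Collinear ℝ S) :
    ∃ p ∈ S, ∃ a ∈ S, ∃ b ∈ S, cross (b - a) (p - a) ≠ 0 := by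
  contrapose! h
  rcases S.subsingleton_or_nontrivial with hS | hS
  · rcases hS.eq_empty_or_singleton with rfl | ⟨a, rfl⟩
    exacts [collinear_empty ℝ _, collinear_singleton ℝ a]
  obtain ⟨a, ha⟩ := hS.nonempty
  obtain ⟨b, hb, hba⟩ := hS.exists_ne a
  rw [collinear_iff_of_mem ha]
  refine ⟨b - a, fun p hp => ⟨dot (b - a) (p - a) / dot (b - a) (b - a), ?_⟩⟩
  rw [vadd_eq_add, ← eq_smul_of_cross_eq_zero (sub_ne_zero.2 hba) (h p hp a ha b hb)]
  abel

lemma isLine_affineSpan_pair {a b : ℝ × ℝ} (h : a ≠ b) : IsLine (line[ℝ, a, b]) := by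
  refine ⟨line[ℝ, a, b], ?_, rfl⟩
  rw [direction_affineSpan, vectorSpan_pair]
  exact finrank_span_singleton (vsub_ne_zero.2 h)

lemma exists_eq_add_smul_of_mem_affineSpan_pair {a v c : ℝ × ℝ} (hc : c ∈ line[ℝ, a, a + v]) :
    ∃ s : ℝ, c = a + s • v := by
  rw [← vsub_vadd c a, vadd_left_mem_affineSpan_pair] at hc
  obtain ⟨s, hs⟩ := hc
  refine ⟨s, ?_⟩
  rw [vsub_eq_sub, vsub_eq_sub, add_sub_cancel_left] at hs
  rw [hs]
  abel

/-- Among three distinct reals, two lie on the same side of `t`, and the nearer one is closer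
to the farther one than `t` is. -/
lemma exists_sq_sub_le_sq_sub (t : ℝ) {x y z : ℝ} (hxy : x ≠ y) (hxz : x ≠ z) (hyz : y ≠ z) :
    ∃ β ∈ ({x, y, z} : Set ℝ), ∃ γ ∈ ({x, y, z} : Set ℝ),
      β ≠ γ ∧ (γ - β) ^ 2 ≤ (γ - t) ^ 2 := by
  have pair : ∀ {β γ : ℝ}, β ∈ ({x, y, z} : Set ℝ) → γ ∈ ({x, y, z} : Set ℝ) → β ≠ γ →
      0 ≤ (β - t) * (γ - t) → ∃ β ∈ ({x, y, z} : Set ℝ), ∃ γ ∈ ({x, y, z} : Set ℝ),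
        β ≠ γ ∧ (γ - β) ^ 2 ≤ (γ - t) ^ 2 := by
    intro β γ hβ hγ hne hside
    rcases le_total ((β - t) ^ 2) ((γ - t) ^ 2) with h | h
    · exact ⟨β, hβ, γ, hγ, hne, by nlinarith⟩
    · exact ⟨γ, hγ, β, hβ, hne.symm, by nlinarith⟩
  by_cases hxy' : 0 ≤ (x - t) * (y - t)
  · exact pair (by simp) (by simp) hxy hxy'
  by_cases hxz' : 0 ≤ (x - t) * (z - t)
  · exact pair (by simp) (by simp) hxz hxz'
  refine pair (by simp) (by simp) hyz ?_
  nlinarith [mul_self_nonneg (x - t)]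

/-- The projection of `u - γ • v` onto `v` is `(t₀ - γ) • v` with `t₀ = dot v u / dot v v`;
it is strictly shorter than `u - γ • v` when `u` is not parallel to `v`. -/
lemma dot_self_mul_sq_lt_dot_self_sub_smul {v u : ℝ × ℝ} (hu : cross v u ≠ 0) (γ : ℝ) :
    dot v v * (γ - dot v u / dot v v) ^ 2 < dot (u - γ • v) (u - γ • v) := by
  have hN := dot_self_pos (ne_zero_of_cross_ne_zero_left hu)
  have hlagrange := cross_sq_add_dot_sq v (u - γ • v)
  have hcross : cross v (u - γ • v) = cross v u := by
    unfold cross; simp only [Prod.fst_sub, Prod.snd_sub, Prod.smul_fst, Prod.smul_snd,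
      smul_eq_mul]; ring
  have hdot : dot v (u - γ • v) = dot v u - γ * dot v v := by
    unfold dot; simp only [Prod.fst_sub, Prod.snd_sub, Prod.smul_fst, Prod.smul_snd,
      smul_eq_mul]; ring
  rw [hcross, hdot] at hlagrange
  have hpos : 0 < cross v u ^ 2 := by positivity
  rw [← mul_lt_mul_iff_of_pos_left hN]
  calc dot v v * (dot v v * (γ - dot v u / dot v v) ^ 2) = (dot v u - γ * dot v v) ^ 2 := by
        field_simp; ring
    _ < _ := by linarith

lemma cross_add_smul_sub_add_smul_sub (a v p : ℝ × ℝ) (β γ : ℝ) :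
    cross (a + γ • v - p) (a + β • v - p) = (β - γ) * cross v (p - a) := by
  unfold cross
  simp only [Prod.fst_sub, Prod.snd_sub, Prod.fst_add, Prod.snd_add, Prod.smul_fst,
    Prod.smul_snd, smul_eq_mul]
  ring

/-- Kelly's step. The foot of the perpendicular from `p` to `a + ℝ v` is `a + t₀ • v` with
`t₀ = dot v (p - a) / dot v v`; `hle` holds when `B = a + β • v` and `C = a + γ • v` lie on the
same side of it with `B` the nearer one. -/
lemma distSq_lt_distSq {a v p : ℝ × ℝ} (hp : cross v (p - a) ≠ 0) {β γ : ℝ}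
    (hle : (γ - β) ^ 2 ≤ (γ - dot v (p - a) / dot v v) ^ 2) :
    distSq (a + β • v) p (a + γ • v) < distSq p a (a + v) := by
  have hN := dot_self_pos (ne_zero_of_cross_ne_zero_left hp)
  have hfar := dot_self_mul_sq_lt_dot_self_sub_smul hp γ
  have hden : dot (a + γ • v - p) (a + γ • v - p) = dot (p - a - γ • v) (p - a - γ • v) := by
    unfold dot
    simp only [Prod.fst_sub, Prod.snd_sub, Prod.fst_add, Prod.snd_add, Prod.smul_fst,
      Prod.smul_snd, smul_eq_mul]
    ring
  have hD : 0 < dot (p - a - γ • v) (p - a - γ • v) := by nlinarith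
  unfold distSq
  rw [cross_add_smul_sub_add_smul_sub, hden, add_sub_cancel_left, mul_pow,
    div_lt_div_iff₀ hD hN]
  have hc : 0 < cross v (p - a) ^ 2 := by positivity
  have hsq : (β - γ) ^ 2 * dot v v < dot (p - a - γ • v) (p - a - γ • v) := by nlinarith
  nlinarith

theorem inter_affineSpan_pair_eq_of_forall_distSq_le {S : Set (ℝ × ℝ)} {p a b : ℝ × ℝ}
    (hp : p ∈ S) (ha : a ∈ S) (hb : b ∈ S) (hpab : cross (b - a) (p - a) ≠ 0)
    (hmin : ∀ p' ∈ S, ∀ a' ∈ S, ∀ b' ∈ S, cross (b' - a') (p' - a') ≠ 0 →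
      distSq p a b ≤ distSq p' a' b') :
    S ∩ line[ℝ, a, b] = {a, b} := by
  refine Set.Subset.antisymm (fun c ⟨hc, hcL⟩ => ?_) ?_
  swap
  · rintro c (rfl | rfl)
    exacts [⟨ha, left_mem_affineSpan_pair _ _ _⟩, ⟨hb, right_mem_affineSpan_pair _ _ _⟩]
  obtain ⟨v, rfl⟩ : ∃ v, b = a + v := ⟨b - a, by abel⟩
  rw [add_sub_cancel_left] at hpab
  obtain ⟨s, rfl⟩ := exists_eq_add_smul_of_mem_affineSpan_pair hcL
  by_contra hs
  have hs0 : s ≠ 0 := fun h => hs (by simp [h])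
  have hs1 : s ≠ 1 := fun h => hs (by simp [h])
  obtain ⟨β, hβ, γ, hγ, hβγ, hle⟩ :=
    exists_sq_sub_le_sq_sub (dot v (p - a) / dot v v) zero_ne_one hs0.symm hs1.symm
  have hmemS : ∀ r ∈ ({0, 1, s} : Set ℝ), a + r • v ∈ S := by
    rintro r (rfl | rfl | rfl) <;> simpa
  have hBpC : cross (a + γ • v - p) (a + β • v - p) ≠ 0 := by
    rw [cross_add_smul_sub_add_smul_sub]
    exact mul_ne_zero (sub_ne_zero.2 hβγ) hpab
  exact (distSq_lt_distSq hpab hle).not_ge (hmin _ (hmemS β hβ) p hp _ (hmemS γ hγ) hBpC)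

end SylvesterGallai

open SylvesterGallai in
/-- **Sylvester–Gallai theorem.** If a finite set of points in the plane is not all on
one line, then some line contains exactly two points of the set. -/
theorem sylvester_gallai (S : Set (ℝ × ℝ)) (hfin : S.Finite) (hncol : ¬ Collinear ℝ S) :
    ∃ L : Set (ℝ × ℝ), IsLine L ∧ (S ∩ L).ncard = 2 := by
  set T : Set ((ℝ × ℝ) × (ℝ × ℝ) × (ℝ × ℝ)) :=
    {t | t.1 ∈ S ∧ t.2.1 ∈ S ∧ t.2.2 ∈ S ∧ cross (t.2.2 - t.2.1) (t.1 - t.2.1) ≠ 0}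
  have hTfin : T.Finite :=
    (hfin.prod (hfin.prod hfin)).subset fun t ht => ⟨ht.1, ht.2.1, ht.2.2.1⟩
  have hTne : T.Nonempty := by
    obtain ⟨p, hp, a, ha, b, hb, h⟩ := exists_cross_ne_zero_of_not_collinear hncol
    exact ⟨(p, a, b), hp, ha, hb, h⟩
  obtain ⟨⟨p, a, b⟩, ⟨hp, ha, hb, hpab⟩, hmin⟩ :=
    Set.exists_min_image T (fun t => distSq t.1 t.2.1 t.2.2) hTfin hTne
  have hab : a ≠ b := fun h => hpab (by simp [h, cross])
  refine ⟨line[ℝ, a, b], isLine_affineSpan_pair hab, ?_⟩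
  rw [inter_affineSpan_pair_eq_of_forall_distSq_le hp ha hb hpab
    fun p' hp' a' ha' b' hb' h => hmin (p', a', b') ⟨hp', ha', hb', h⟩, Set.ncard_pair hab]
end

section
/- Consider an abstract geometry with a finite point set P of cardinality n in which every line contains at most 3 points, and let each point of P be colored red or blue. Then the number of monochromatic lines (lines all of whose points have the same color) is at least n²/24 − n/6 + t₂/6, where t₂ is the number of lines containing exactly 2 points. -/
/-!
Count ordered pairs of distinct points of the same colour. With `r` red and `b` blue points there
are `r(r-1) + b(b-1) ≥ n²/2 - n` of them, and each lies on exactly one line. A line carries at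
most `4 + 2·[|l| = 3]` of them if it is monochromatic and at most `2·[|l| = 3]` otherwise, so their
number is at most `4M + 2t₃`. Counting all ordered pairs the same way gives `n(n-1) = 2t₂ + 6t₃`,
and eliminating `t₃` yields the bound.
-/

open Finset

section

variable {P : Type*}

lemma card_offDiag_eq_sum_card_offDiag_inter [DecidableEq P] {L : Finset (Finset P)}
    (h_unique : ∀ p q : P, p ≠ q → ∃! l, l ∈ L ∧ p ∈ l ∧ q ∈ l) (s : Finset P) :
    #s.offDiag = ∑ l ∈ L, #(s ∩ l).offDiag := by
  have h_cover : s.offDiag = L.biUnion fun l => (s ∩ l).offDiag := by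
    ext ⟨p, q⟩
    simp only [mem_offDiag, mem_biUnion, mem_inter]
    constructor
    · rintro ⟨hp, hq, hpq⟩
      obtain ⟨l, ⟨hl, hpl, hql⟩, -⟩ := h_unique p q hpq
      exact ⟨l, hl, ⟨hp, hpl⟩, ⟨hq, hql⟩, hpq⟩
    · rintro ⟨l, -, ⟨hp, -⟩, ⟨hq, -⟩, hpq⟩
      exact ⟨hp, hq, hpq⟩
  rw [h_cover, card_biUnion]
  rintro l hl l' hl' hne
  refine disjoint_left.mpr fun ⟨p, q⟩ h h' => hne ?_
  simp only [mem_offDiag, mem_inter] at h h'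
  exact (h_unique p q h.2.2).unique ⟨hl, h.1.2, h.2.1.2⟩ ⟨hl', h'.1.2, h'.2.1.2⟩

lemma cast_card_offDiag {R : Type*} [CommRing R] (s : Finset P) :
    (#s.offDiag : R) = #s * (#s - 1) := by
  rw [offDiag_card, Nat.cast_sub (Nat.le_mul_self _)]
  push_cast
  ring

lemma forall_mem_eq_iff_card_filter_eq_zero (l : Finset P) (c : P → Bool) :
    (∀ p ∈ l, ∀ q ∈ l, c p = c q) ↔
      #(l.filter (c · = true)) = 0 ∨ #(l.filter (c · = false)) = 0 := by
  simp only [card_eq_zero, filter_eq_empty_iff]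
  constructor
  · intro h
    by_contra! ⟨⟨p, hp, hcp⟩, ⟨q, hq, hcq⟩⟩
    exact absurd (h p hp q hq) (by simp [hcp, hcq])
  · rintro (h | h) p hp q hq <;> simp_all

lemma mul_self_sub_add_mul_self_sub_le {a b : ℕ} (h : a + b ≤ 3) :
    a * a - a + (b * b - b) ≤
      (if a = 0 ∨ b = 0 then 4 else 0) + (if a + b = 3 then 2 else 0) := by
  have : a ≤ 3 := by omega
  have : b ≤ 3 := by omega
  interval_cases a <;> interval_cases b <;> simp_all

lemma card_offDiag_filter_add_le (l : Finset P) (hl : #l ≤ 3) (c : P → Bool) :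
    #(l.filter (c · = true)).offDiag + #(l.filter (c · = false)).offDiag ≤
      (if ∀ p ∈ l, ∀ q ∈ l, c p = c q then 4 else 0) + (if #l = 3 then 2 else 0) := by
  have h_split : #(l.filter (c · = true)) + #(l.filter (c · = false)) = #l := by
    simpa using card_filter_add_card_filter_not (s := l) (c · = true)
  simp only [forall_mem_eq_iff_card_filter_eq_zero]
  rw [offDiag_card, offDiag_card, ← h_split]
  exact mul_self_sub_add_mul_self_sub_le (h_split ▸ hl)

variable [Fintype P] [DecidableEq P] {L : Finset (Finset P)}

lemma card_offDiag_univ_eq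
    (h_unique : ∀ p q : P, p ≠ q → ∃! l, l ∈ L ∧ p ∈ l ∧ q ∈ l)
    (h_three : ∀ l ∈ L, #l ≤ 3) :
    #(univ : Finset P).offDiag = 2 * #(L.filter (#· = 2)) + 6 * #(L.filter (#· = 3)) := by
  rw [card_offDiag_eq_sum_card_offDiag_inter h_unique, card_filter, card_filter, mul_sum, mul_sum,
    ← sum_add_distrib]
  refine sum_congr rfl fun l hl => ?_
  rw [univ_inter, offDiag_card]
  have := h_three l hl
  interval_cases #l <;> rfl

lemma card_offDiag_filter_univ_add_le
    (h_unique : ∀ p q : P, p ≠ q → ∃! l, l ∈ L ∧ p ∈ l ∧ q ∈ l)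
    (h_three : ∀ l ∈ L, #l ≤ 3) (c : P → Bool) :
    #(univ.filter (c · = true)).offDiag + #(univ.filter (c · = false)).offDiag ≤
      4 * #(L.filter fun l => ∀ p ∈ l, ∀ q ∈ l, c p = c q) + 2 * #(L.filter (#· = 3)) := by
  rw [card_offDiag_eq_sum_card_offDiag_inter h_unique,
    card_offDiag_eq_sum_card_offDiag_inter h_unique, ← sum_add_distrib, card_filter, card_filter,
    mul_sum, mul_sum, ← sum_add_distrib]
  refine sum_le_sum fun l hl => ?_
  simp only [filter_inter, univ_inter, mul_ite, mul_one, mul_zero]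
  -- `congr` reconciles two different `Decidable` instances of the monochromaticity predicate
  exact (card_offDiag_filter_add_le l (h_three l hl) c).trans_eq (by congr)

end

theorem mono_lines_abstract_geometry_general {P : Type*} [Fintype P] [DecidableEq P]
    (L : Finset (Finset P))
    (h_unique : ∀ p q : P, p ≠ q → ∃! l, l ∈ L ∧ p ∈ l ∧ q ∈ l)
    (h_three : ∀ l ∈ L, l.card ≤ 3)
    (c : P → Bool) :
    (((L.filter (fun l => ∀ p ∈ l, ∀ q ∈ l, c p = c q)).card : ℝ)) ≥
      (Fintype.card P : ℝ) ^ 2 / 24 - (Fintype.card P : ℝ) / 6 +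
        ((L.filter (fun l => l.card = 2)).card : ℝ) / 6 := by
  have h_pairs : (#(univ.filter (c · = true)) : ℝ) * (#(univ.filter (c · = true)) - 1) +
      #(univ.filter (c · = false)) * (#(univ.filter (c · = false)) - 1) ≤
      4 * #(L.filter fun l => ∀ p ∈ l, ∀ q ∈ l, c p = c q) + 2 * #(L.filter (#· = 3)) := by
    rw [← cast_card_offDiag, ← cast_card_offDiag]
    exact_mod_cast card_offDiag_filter_univ_add_le h_unique h_three c
  have h_total : (Fintype.card P : ℝ) * (Fintype.card P - 1) =
      2 * #(L.filter (#· = 2)) + 6 * #(L.filter (#· = 3)) := by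
    rw [← card_univ, ← cast_card_offDiag]
    exact_mod_cast card_offDiag_univ_eq h_unique h_three
  have h_split : (#(univ.filter (c · = true)) : ℝ) + #(univ.filter (c · = false)) =
      Fintype.card P := by
    rw [← card_univ]
    exact_mod_cast by simpa using card_filter_add_card_filter_not (s := univ) (c · = true)
  nlinarith [sq_nonneg ((#(univ.filter (c · = true)) : ℝ) - #(univ.filter (c · = false)))]

/-- **Monochromatic lines in abstract geometries with at most 3 points per line.**
An abstract geometry is given by a finite point set `P` and a collection `L` of lines
(finite sets of points), where every line has at least two points and any two distinct
points lie on a unique line.  If every line has at most `3` points and the points are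
`2`-colored, then the number of monochromatic lines is at least
`n²/24 − n/6 + t₂/6`, where `n` is the number of points and `t₂` is the number of
lines with exactly two points. -/
theorem mono_lines_abstract_geometry {P : Type*} [Fintype P] [DecidableEq P]
    (L : Finset (Finset P))
    (h_two : ∀ l ∈ L, 2 ≤ l.card)
    (h_unique : ∀ p q : P, p ≠ q → ∃! l, l ∈ L ∧ p ∈ l ∧ q ∈ l)
    (h_three : ∀ l ∈ L, l.card ≤ 3)
    (c : P → Bool) :
    (((L.filter (fun l => ∀ p ∈ l, ∀ q ∈ l, c p = c q)).card : ℝ)) ≥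
      (Fintype.card P : ℝ) ^ 2 / 24 - (Fintype.card P : ℝ) / 6 +
        ((L.filter (fun l => l.card = 2)).card : ℝ) / 6 :=
  mono_lines_abstract_geometry_general L h_unique h_three c
end

section
/- Let K ≥ 1 be a real number and let S be a set of n points in the real plane ℝ² such that no line contains more than 3 points of S, with each point colored red or blue. If the number of monochromatic lines of S is at most n²/24 + K·n, then the number of ordinary lines of S (lines containing exactly two points of S) is at most (6K + 1)·n. -/
/-- The monochromatic lines of a two-colored point set `S`: lines containing at least
two points of `S`, all points of `S` on the line having the same color. -/
def monoLines (S : Set (ℝ × ℝ)) (c : (ℝ × ℝ) → Bool) : Set (Set (ℝ × ℝ)) :=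
  {L | IsLine L ∧ 2 ≤ (S ∩ L).ncard ∧ ∀ p ∈ S ∩ L, ∀ q ∈ S ∩ L, c p = c q}

open Finset

section Coloring

variable {α : Type*} (c : α → Bool)

lemma card_filter_add_card_filter_not_bool (T : Finset α) :
    #{p ∈ T | c p} + #{p ∈ T | !c p} = #T := by
  simpa using card_filter_add_card_filter_not (s := T) (fun p => c p = true)

variable [DecidableEq α]

def bichromaticPairs (T : Finset α) : Finset (α × α) := {pq ∈ T.offDiag | c pq.1 ≠ c pq.2}

lemma bichromaticPairs_eq_union (T : Finset α) :
    bichromaticPairs c T =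
      {p ∈ T | c p} ×ˢ {p ∈ T | !c p} ∪ {p ∈ T | !c p} ×ˢ {p ∈ T | c p} := by
  ext ⟨p, q⟩
  simp only [bichromaticPairs, mem_filter, mem_offDiag, mem_union, mem_product]
  constructor
  · rintro ⟨⟨hp, hq, -⟩, hc⟩
    cases hcp : c p <;> simp_all
  · rintro (⟨⟨hp, hcp⟩, hq, hcq⟩ | ⟨⟨hp, hcp⟩, hq, hcq⟩) <;>
      exact ⟨⟨hp, hq, by rintro rfl; simp_all⟩, by simp_all⟩

lemma card_bichromaticPairs (T : Finset α) :
    #(bichromaticPairs c T) = 2 * #{p ∈ T | c p} * #{p ∈ T | !c p} := by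
  rw [bichromaticPairs_eq_union, card_union_of_disjoint, card_product, card_product]
  · ring
  · simp only [disjoint_left, mem_product, mem_filter]
    rintro ⟨p, q⟩ ⟨⟨-, h⟩, -⟩ ⟨⟨-, h'⟩, -⟩
    simp_all

lemma bichromaticPairs_eq_empty_iff (T : Finset α) :
    bichromaticPairs c T = ∅ ↔ ∀ p ∈ T, ∀ q ∈ T, c p = c q := by
  simp only [bichromaticPairs, filter_eq_empty_iff, mem_offDiag, not_not, and_imp, Prod.forall]
  exact ⟨fun h p hp q hq => if hpq : p = q then hpq ▸ rfl else h p q hp hq hpq,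
    fun h p q hp hq _ => h p hp q hq⟩

lemma two_mul_card_bichromaticPairs_le (T : Finset α) :
    2 * #(bichromaticPairs c T) ≤ #T ^ 2 := by
  rw [card_bichromaticPairs, ← card_filter_add_card_filter_not_bool c T]
  nlinarith [sq_nonneg ((#{p ∈ T | c p} : ℤ) - #{p ∈ T | !c p})]

/-- The weights `2` and `12` are chosen so that this is tight for a bichromatic pair and for
every triple; only a monochromatic pair has slack. -/
lemma two_mul_ite_add_two_mul_card_offDiag_le (T : Finset α) (h2 : 2 ≤ #T) (h3 : #T ≤ 3) :
    2 * (if #T = 2 then 1 else 0) + 2 * #T.offDiag ≤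
      12 * (if ∀ p ∈ T, ∀ q ∈ T, c p = c q then 1 else 0) + 3 * #(bichromaticPairs c T) := by
  simp only [← bichromaticPairs_eq_empty_iff, ← card_eq_zero, card_bichromaticPairs,
    offDiag_card, ← card_filter_add_card_filter_not_bool c T] at *
  generalize #{p ∈ T | c p} = r at *
  generalize #{p ∈ T | !c p} = b at *
  have hr : r ≤ 3 := by omega
  have hb : b ≤ 3 := by omega
  interval_cases r <;> interval_cases b <;> simp_all

end Coloring

section Lines

lemma finrank_direction_affineSpan_pair {k V P : Type*} [DivisionRing k] [AddCommGroup V]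
    [Module k V] [AddTorsor V P] {p q : P} (h : p ≠ q) :
    Module.finrank k (line[k, p, q]).direction = 1 := by
  rw [direction_affineSpan, vectorSpan_pair, finrank_span_singleton (vsub_ne_zero.2 h)]

lemma isLine_affineSpan_pair {p q : ℝ × ℝ} (h : p ≠ q) : IsLine (line[ℝ, p, q]) :=
  ⟨_, finrank_direction_affineSpan_pair h, rfl⟩

lemma IsLine.eq_affineSpan_pair {L : Set (ℝ × ℝ)} (hL : IsLine L) {p q : ℝ × ℝ}
    (hp : p ∈ L) (hq : q ∈ L) (h : p ≠ q) : L = line[ℝ, p, q] := by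
  obtain ⟨ℓ, hdim, rfl⟩ := hL
  have hle : line[ℝ, p, q] ≤ ℓ := affineSpan_pair_le_of_mem_of_mem hp hq
  have hdir : (line[ℝ, p, q]).direction = ℓ.direction :=
    Submodule.eq_of_le_of_finrank_eq (AffineSubspace.direction_le hle)
      (by rw [hdim, finrank_direction_affineSpan_pair h])
  rw [AffineSubspace.eq_of_direction_eq_of_nonempty_of_le hdir
    ⟨p, left_mem_affineSpan_pair ℝ p q⟩ hle]

open scoped Classical

variable (F : Finset (ℝ × ℝ))

noncomputable def spannedLines : Finset (Set (ℝ × ℝ)) :=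
  F.offDiag.image fun pq => (line[ℝ, pq.1, pq.2] : Set (ℝ × ℝ))

noncomputable def ordinaryLines : Finset (Set (ℝ × ℝ)) :=
  {L ∈ spannedLines F | #{p ∈ F | p ∈ L} = 2}

noncomputable def monochromaticLines (c : ℝ × ℝ → Bool) : Finset (Set (ℝ × ℝ)) :=
  {L ∈ spannedLines F | ∀ p ∈ {p ∈ F | p ∈ L}, ∀ q ∈ {p ∈ F | p ∈ L}, c p = c q}

lemma ncard_coe_inter (L : Set (ℝ × ℝ)) : ((F : Set (ℝ × ℝ)) ∩ L).ncard = #{p ∈ F | p ∈ L} := by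
  rw [← Set.ncard_coe_finset, coe_filter]
  rfl

variable {F}

lemma mem_spannedLines {L : Set (ℝ × ℝ)} :
    L ∈ spannedLines F ↔ IsLine L ∧ 2 ≤ #{p ∈ F | p ∈ L} := by
  simp only [spannedLines, mem_image, mem_offDiag]
  constructor
  · rintro ⟨⟨p, q⟩, ⟨hp, hq, hpq⟩, rfl⟩
    refine ⟨isLine_affineSpan_pair hpq, ?_⟩
    calc 2 = #{p, q} := (card_pair hpq).symm
      _ ≤ _ := card_le_card fun x hx => by
        rcases mem_insert.1 hx with rfl | hx
        · exact mem_filter.2 ⟨hp, left_mem_affineSpan_pair ℝ x q⟩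
        · rw [mem_singleton.1 hx]
          exact mem_filter.2 ⟨hq, right_mem_affineSpan_pair ℝ p q⟩
  · rintro ⟨hL, h2⟩
    obtain ⟨p, hp, q, hq, hpq⟩ := one_lt_card.1 h2
    rw [mem_filter] at hp hq
    exact ⟨(p, q), ⟨hp.1, hq.1, hpq⟩, (hL.eq_affineSpan_pair hp.2 hq.2 hpq).symm⟩

lemma sum_spannedLines_card_offDiag_filter (P : (ℝ × ℝ) × (ℝ × ℝ) → Prop) [DecidablePred P] :
    ∑ L ∈ spannedLines F, #{pq ∈ {p ∈ F | p ∈ L}.offDiag | P pq} = #{pq ∈ F.offDiag | P pq} := by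
  rw [card_eq_sum_card_fiberwise (f := fun pq => (line[ℝ, pq.1, pq.2] : Set (ℝ × ℝ)))
    (t := spannedLines F)
    fun pq hpq => mem_image_of_mem _ (mem_filter.1 hpq).1]
  refine sum_congr rfl fun L hL => congrArg card ?_
  ext ⟨p, q⟩
  simp only [mem_filter, mem_offDiag]
  constructor
  · rintro ⟨⟨⟨hp, hpL⟩, ⟨hq, hqL⟩, hpq⟩, hP⟩
    exact ⟨⟨⟨hp, hq, hpq⟩, hP⟩, ((mem_spannedLines.1 hL).1.eq_affineSpan_pair hpL hqL hpq).symm⟩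
  · rintro ⟨⟨⟨hp, hq, hpq⟩, hP⟩, rfl⟩
    exact ⟨⟨⟨hp, left_mem_affineSpan_pair ℝ p q⟩, ⟨hq, right_mem_affineSpan_pair ℝ p q⟩, hpq⟩, hP⟩

lemma four_mul_card_ordinaryLines_add_sq_le (h_three : ∀ L, IsLine L → #{p ∈ F | p ∈ L} ≤ 3)
    (c : ℝ × ℝ → Bool) :
    4 * #(ordinaryLines F) + #F ^ 2 ≤ 24 * #(monochromaticLines F c) + 4 * #F := by
  have h_pairs := sum_spannedLines_card_offDiag_filter (F := F) fun _ => True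
  have h_bichromatic := sum_spannedLines_card_offDiag_filter (F := F) fun pq => c pq.1 ≠ c pq.2
  simp only [filter_true] at h_pairs
  have h_count : 2 * #(ordinaryLines F) + 2 * #F.offDiag ≤
      12 * #(monochromaticLines F c) + 3 * #(bichromaticPairs c F) :=
    calc _ = ∑ L ∈ spannedLines F,
          (2 * (if #{p ∈ F | p ∈ L} = 2 then 1 else 0) + 2 * #{p ∈ F | p ∈ L}.offDiag) := by
          rw [sum_add_distrib, ← mul_sum, ← mul_sum, sum_boole, h_pairs]; rfl
      _ ≤ ∑ L ∈ spannedLines F,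
          (12 * (if ∀ p ∈ {p ∈ F | p ∈ L}, ∀ q ∈ {p ∈ F | p ∈ L}, c p = c q then 1 else 0) +
            3 * #(bichromaticPairs c {p ∈ F | p ∈ L})) :=
          sum_le_sum fun L hL => two_mul_ite_add_two_mul_card_offDiag_le c _
            (mem_spannedLines.1 hL).2 (h_three L (mem_spannedLines.1 hL).1)
      _ = _ := by
          rw [sum_add_distrib, ← mul_sum, ← mul_sum, sum_boole]
          exact congrArg _ (congrArg _ h_bichromatic)
  have h_bichromatic_le := two_mul_card_bichromaticPairs_le c F
  rw [offDiag_card] at h_count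
  rw [sq] at h_bichromatic_le ⊢
  have h_le_sq := Nat.le_mul_self #F
  omega

lemma coe_ordinaryLines :
    (ordinaryLines F : Set (Set (ℝ × ℝ))) = {L | IsLine L ∧ ((F : Set (ℝ × ℝ)) ∩ L).ncard = 2} := by
  ext L
  simp only [ordinaryLines, ncard_coe_inter, coe_filter, mem_spannedLines, Set.mem_ofPred_eq]
  constructor
  · rintro ⟨⟨hL, -⟩, h2⟩
    exact ⟨hL, h2⟩
  · rintro ⟨hL, h2⟩
    exact ⟨⟨hL, h2.ge⟩, h2⟩

lemma coe_monochromaticLines (c : ℝ × ℝ → Bool) :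
    (monochromaticLines F c : Set (Set (ℝ × ℝ))) = monoLines F c := by
  ext L
  simp only [monoLines, monochromaticLines, ncard_coe_inter, coe_filter, mem_spannedLines,
    Set.mem_ofPred_eq, Set.mem_inter_iff, mem_coe, mem_filter]
  tauto

end Lines

theorem few_mono_lines_implies_few_ordinary_lines_general (K : ℝ) (n : ℕ)
    (S : Set (ℝ × ℝ)) (hfin : S.Finite) (hcard : S.ncard = n)
    (h_three : ∀ L : Set (ℝ × ℝ), IsLine L → (S ∩ L).ncard ≤ 3)
    (c : (ℝ × ℝ) → Bool)
    (h_mono : ((monoLines S c).ncard : ℝ) ≤ (n : ℝ) ^ 2 / 24 + K * n) :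
    (({L : Set (ℝ × ℝ) | IsLine L ∧ (S ∩ L).ncard = 2}).ncard : ℝ) ≤ (6 * K + 1) * n := by
  obtain ⟨F, rfl⟩ := hfin.exists_finset_coe
  rw [Set.ncard_coe_finset] at hcard
  subst hcard
  rw [← coe_monochromaticLines, Set.ncard_coe_finset] at h_mono
  rw [← coe_ordinaryLines, Set.ncard_coe_finset]
  have h_count : (4 * #(ordinaryLines F) + #F ^ 2 : ℝ) ≤
      24 * #(monochromaticLines F c) + 4 * #F := by
    exact_mod_cast four_mul_card_ordinaryLines_add_sq_le
      (fun L hL => ncard_coe_inter F L ▸ h_three L hL) c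
  linarith

/-- If a two-colored set of `n` points in the plane with at most `3` points on any
line has at most `n²/24 + K·n` monochromatic lines (`K ≥ 1`), then it has at most
`(6K + 1)·n` ordinary lines (lines with exactly two points of the set). -/
theorem few_mono_lines_implies_few_ordinary_lines (K : ℝ) (hK : 1 ≤ K) (n : ℕ)
    (S : Set (ℝ × ℝ)) (hfin : S.Finite) (hcard : S.ncard = n)
    (h_three : ∀ L : Set (ℝ × ℝ), IsLine L → (S ∩ L).ncard ≤ 3)
    (c : (ℝ × ℝ) → Bool)
    (h_mono : ((monoLines S c).ncard : ℝ) ≤ (n : ℝ) ^ 2 / 24 + K * n) :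
    (({L : Set (ℝ × ℝ) | IsLine L ∧ (S ∩ L).ncard = 2}).ncard : ℝ) ≤ (6 * K + 1) * n :=
  few_mono_lines_implies_few_ordinary_lines_general K n S hfin hcard h_three c h_mono
end

section
/- Let 0 < p < 1, define f(x) = p^x + (1−p)^x, and let n ≥ 10 be an integer. Then 3·f(2) − 2·f(3) + (n(n+3)/9)·f(3) ≥ (n−1)·f(2) + f(n−1); that is, 3(p²+(1−p)²) − 2(p³+(1−p)³) + (n(n+3)/9)(p³+(1−p)³) ≥ (n−1)(p²+(1−p)²) + p^{n−1} + (1−p)^{n−1}. -/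
/-!
Both sides depend on `p` only through `t = p (1 - p) ∈ (0, 1/4]`: `f 2 = 1 - 2t`, `f 3 = 1 - 3t`,
and since `k ↦ f k` is decreasing, `f (n - 1) ≤ f 5 = 1 - 5t + 5t²` for `n ≥ 6`. The remaining
inequality is concave in `t`, so it suffices to check it at `t = 0`, where it reads `(m - 3)² ≥ 0`,
and at `t = 1/4`, where it reads `4 (m - 10) (m - 5) + 7 ≥ 0`.
-/

section PowAddOneSubPow

variable {R : Type*} [CommRing R]

theorem sq_add_one_sub_sq (p : R) : p ^ 2 + (1 - p) ^ 2 = 1 - 2 * (p * (1 - p)) := by ring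

theorem pow_three_add_one_sub_pow_three (p : R) :
    p ^ 3 + (1 - p) ^ 3 = 1 - 3 * (p * (1 - p)) := by ring

theorem pow_five_add_one_sub_pow_five (p : R) :
    p ^ 5 + (1 - p) ^ 5 = 1 - 5 * (p * (1 - p)) + 5 * (p * (1 - p)) ^ 2 := by ring

theorem pow_add_one_sub_pow_antitone [LinearOrder R] [IsStrictOrderedRing R] {p : R}
    (hp0 : 0 ≤ p) (hp1 : p ≤ 1) : Antitone fun k : ℕ => p ^ k + (1 - p) ^ k :=
  fun _ _ hkl => add_le_add (pow_le_pow_of_le_one hp0 hp1 hkl)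
    (pow_le_pow_of_le_one (sub_nonneg.2 hp1) (sub_le_self 1 hp0) hkl)

end PowAddOneSubPow

theorem mul_one_sub_le_one_quarter (p : ℝ) : p * (1 - p) ≤ 1 / 4 := by
  nlinarith [sq_nonneg (2 * p - 1)]

theorem combination_inequality_in_mul_one_sub {t m : ℝ} (ht0 : 0 ≤ t) (ht : t ≤ 1 / 4)
    (hm : 10 ≤ m) :
    (m - 1) * (1 - 2 * t) + (1 - 5 * t + 5 * t ^ 2) ≤
      3 * (1 - 2 * t) - 2 * (1 - 3 * t) + m * (m + 3) / 9 * (1 - 3 * t) := by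
  nlinarith [mul_nonneg (by linarith : 0 ≤ 1 - 4 * t) (sq_nonneg (m - 3)),
    mul_nonneg ht0 (mul_nonneg (by linarith : 0 ≤ m - 10) (by linarith : 0 ≤ m - 5)),
    mul_nonneg ht0 (by linarith : 0 ≤ 1 / 4 - t)]

/-- For `0 < p < 1`, `f(x) = p^x + (1−p)^x`, and every integer `n ≥ 10`, one has
`3·f(2) − 2·f(3) + (n(n+3)/9)·f(3) ≥ (n−1)·f(2) + f(n−1)`. -/
theorem melchior_langer_combination_inequality (p : ℝ) (hp0 : 0 < p) (hp1 : p < 1)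
    (n : ℕ) (hn : 10 ≤ n) :
    3 * (p ^ 2 + (1 - p) ^ 2) - 2 * (p ^ 3 + (1 - p) ^ 3) +
        ((n : ℝ) * ((n : ℝ) + 3) / 9) * (p ^ 3 + (1 - p) ^ 3) ≥
      ((n : ℝ) - 1) * (p ^ 2 + (1 - p) ^ 2) + (p ^ (n - 1) + (1 - p) ^ (n - 1)) := by
  have hf : p ^ (n - 1) + (1 - p) ^ (n - 1) ≤ p ^ 5 + (1 - p) ^ 5 :=
    pow_add_one_sub_pow_antitone hp0.le hp1.le (by omega)
  have key := combination_inequality_in_mul_one_sub (mul_pos hp0 (sub_pos.2 hp1)).le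
    (mul_one_sub_le_one_quarter p) (by exact_mod_cast hn : (10 : ℝ) ≤ n)
  rw [pow_five_add_one_sub_pow_five] at hf
  rw [sq_add_one_sub_sq, pow_three_add_one_sub_pow_three]
  linarith
end

section
/- Let m ≥ 3 be an odd integer. On the ellipse x² + 4y² = 1 in ℝ², let B be the set of m blue points (cos(2πk/m − π/4), 2·sin(2πk/m − π/4)) for k = 0, 1, …, m−1, and let R be the set of m red points (cos(2πk/m + 3π/4), 2·sin(2πk/m + 3π/4)) for k = 0, 1, …, m−1. Then B and R are disjoint, and there is no monochromatic circle for the colored point set B ∪ R: there is no circle in ℝ² that contains at least three points of B ∪ R such that all points of B ∪ R lying on it have the same color. -/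
/-- The point of the Euclidean plane with coordinates `(x, y)`. -/
noncomputable def planePt (x y : ℝ) : EuclideanSpace ℝ (Fin 2) :=
  (WithLp.equiv 2 (Fin 2 → ℝ)).symm ![x, y]

/-!
Parametrize the ellipse by `z ↦ (Re z, 2 Im z)` on the unit circle. Substituting
`Re z = (z + z⁻¹) / 2` and `Im z = (z - z⁻¹) / (2i)` into the equation of a circle and multiplying
by `-4z²/3` gives a monic quartic in `z` with constant term `1`, so the four roots multiply to `1`:
a circle through the points of `z₁, z₂, z₃` also passes through the point of `(z₁z₂z₃)⁻¹`.
The blue points are the `z` with `z ^ m = T` and the red ones those with `z ^ m = -T`, where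
`T = exp (-iπm/4)` satisfies `T ^ 4 = -1` because `m` is odd. Hence the fourth point `w` of a
circle through three blue points has `w ^ m = T⁻³ = -T` and is red, and symmetrically.
-/

open Complex ComplexConjugate Metric Set
open scoped Real

noncomputable def ellipsePt (z : ℂ) : EuclideanSpace ℝ (Fin 2) := planePt z.re (2 * z.im)

theorem ellipsePt_injective : Function.Injective ellipsePt := by
  intro z w h
  have h0 := congrFun (congrArg (WithLp.equiv 2 (Fin 2 → ℝ)) h) 0
  have h1 := congrFun (congrArg (WithLp.equiv 2 (Fin 2 → ℝ)) h) 1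
  simp [ellipsePt, planePt] at h0 h1
  exact Complex.ext h0 h1

theorem ellipsePt_exp_mul_I (θ : ℝ) :
    ellipsePt (exp (θ * I)) = planePt (Real.cos θ) (2 * Real.sin θ) := by
  rw [ellipsePt, exp_ofReal_mul_I_re, exp_ofReal_mul_I_im]

theorem dist_ellipsePt_sq (z : ℂ) (o : EuclideanSpace ℝ (Fin 2)) :
    dist (ellipsePt z) o ^ 2 = (z.re - o 0) ^ 2 + (2 * z.im - o 1) ^ 2 := by
  rw [EuclideanSpace.dist_eq, Real.sq_sqrt (by positivity), Fin.sum_univ_two, Real.dist_eq,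
    Real.dist_eq, sq_abs, sq_abs]
  rfl

theorem exists_quartic_iff_dist_ellipsePt_sq (o : EuclideanSpace ℝ (Fin 2)) (r : ℝ) :
    ∃ c₁ c₂ c₃ : ℂ, ∀ z : ℂ, ‖z‖ = 1 →
      (dist (ellipsePt z) o ^ 2 = r ↔ z ^ 4 + c₃ * z ^ 3 + c₂ * z ^ 2 + c₁ * z + 1 = 0) := by
  set a : ℂ := ((o 0 : ℝ) : ℂ)
  set b : ℂ := ((o 1 : ℝ) : ℂ)
  refine ⟨4 * a / 3 + 8 * b / 3 * I, -(10 / 3) - 4 / 3 * (a ^ 2 + b ^ 2 - r),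
    4 * a / 3 - 8 * b / 3 * I, fun z hz => ?_⟩
  have hz0 : z ≠ 0 := by rintro rfl; simp at hz
  have hzz : z * conj z = 1 := by rw [mul_conj, normSq_eq_norm_sq, hz]; norm_num
  have him : (2 * z.im : ℂ) = -I * (z - conj z) := by
    rw [im_eq_sub_conj, div_eq_mul_inv, mul_inv, inv_I]; ring
  have key : z ^ 4 + (4 * a / 3 - 8 * b / 3 * I) * z ^ 3
      + (-(10 / 3) - 4 / 3 * (a ^ 2 + b ^ 2 - r)) * z ^ 2 + (4 * a / 3 + 8 * b / 3 * I) * z + 1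
      = -4 / 3 * z ^ 2 * ((z.re - a) ^ 2 + (2 * z.im - b) ^ 2 - r) := by
    rw [re_eq_add_conj, him]
    linear_combination (10 / 3 * z ^ 2 - (z * conj z + 1) - (4 * a / 3 + 8 * b / 3 * I) * z) * hzz
      + (4 / 3 * z ^ 2 * (z - conj z) ^ 2) * I_sq
  rw [dist_ellipsePt_sq, key, mul_eq_zero, or_iff_right (by simpa using hz0), sub_eq_zero]
  simp only [a, b]
  norm_cast

theorem quadratic_coeffs_eq_zero_of_three_roots {R : Type*} [CommRing R] [NoZeroDivisors R]
    {a b c z₁ z₂ z₃ : R} (h₁₂ : z₁ ≠ z₂) (h₁₃ : z₁ ≠ z₃) (h₂₃ : z₂ ≠ z₃)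
    (e₁ : a * z₁ ^ 2 + b * z₁ + c = 0) (e₂ : a * z₂ ^ 2 + b * z₂ + c = 0)
    (e₃ : a * z₃ ^ 2 + b * z₃ + c = 0) :
    a = 0 ∧ b = 0 ∧ c = 0 := by
  have d₁₂ : a * (z₁ + z₂) + b = 0 := by
    have h : (z₁ - z₂) * (a * (z₁ + z₂) + b) = 0 := by linear_combination e₁ - e₂
    exact (mul_eq_zero.mp h).resolve_left (sub_ne_zero.mpr h₁₂)
  have d₁₃ : a * (z₁ + z₃) + b = 0 := by
    have h : (z₁ - z₃) * (a * (z₁ + z₃) + b) = 0 := by linear_combination e₁ - e₃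
    exact (mul_eq_zero.mp h).resolve_left (sub_ne_zero.mpr h₁₃)
  have ha : a = 0 := by
    have h : (z₂ - z₃) * a = 0 := by linear_combination d₁₂ - d₁₃
    exact (mul_eq_zero.mp h).resolve_left (sub_ne_zero.mpr h₂₃)
  have hb : b = 0 := by linear_combination d₁₂ - (z₁ + z₂) * ha
  exact ⟨ha, hb, by linear_combination e₁ - z₁ ^ 2 * ha - z₁ * hb⟩

theorem quartic_eq_zero_of_three_roots_of_mul_eq_one {K : Type*} [Field K]
    {c₁ c₂ c₃ z₁ z₂ z₃ w : K} (h₁₂ : z₁ ≠ z₂) (h₁₃ : z₁ ≠ z₃) (h₂₃ : z₂ ≠ z₃)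
    (e₁ : z₁ ^ 4 + c₃ * z₁ ^ 3 + c₂ * z₁ ^ 2 + c₁ * z₁ + 1 = 0)
    (e₂ : z₂ ^ 4 + c₃ * z₂ ^ 3 + c₂ * z₂ ^ 2 + c₁ * z₂ + 1 = 0)
    (e₃ : z₃ ^ 4 + c₃ * z₃ ^ 3 + c₂ * z₃ ^ 2 + c₁ * z₃ + 1 = 0) (hw : z₁ * z₂ * z₃ * w = 1) :
    w ^ 4 + c₃ * w ^ 3 + c₂ * w ^ 2 + c₁ * w + 1 = 0 := by
  set A := c₃ + (z₁ + z₂ + z₃ + w)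
  set B := c₂ - (z₁ * z₂ + z₁ * z₃ + z₂ * z₃ + w * (z₁ + z₂ + z₃))
  set C := c₁ + (z₁ * z₂ * z₃ + w * (z₁ * z₂ + z₁ * z₃ + z₂ * z₃))
  have key (z : K) : z ^ 4 + c₃ * z ^ 3 + c₂ * z ^ 2 + c₁ * z + 1
      = (z - z₁) * (z - z₂) * (z - z₃) * (z - w) + z * (A * z ^ 2 + B * z + C) := by
    linear_combination -hw
  have quadratic_root {z : K} (e : z ^ 4 + c₃ * z ^ 3 + c₂ * z ^ 2 + c₁ * z + 1 = 0)
      (h : (z - z₁) * (z - z₂) * (z - z₃) = 0) : A * z ^ 2 + B * z + C = 0 := by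
    have hz : z ≠ 0 := by rintro rfl; simp at e
    rw [key, h, zero_mul, zero_add] at e
    exact (mul_eq_zero.mp e).resolve_left hz
  obtain ⟨hA, hB, hC⟩ := quadratic_coeffs_eq_zero_of_three_roots h₁₂ h₁₃ h₂₃
    (quadratic_root e₁ (by ring)) (quadratic_root e₂ (by ring)) (quadratic_root e₃ (by ring))
  rw [key, hA, hB, hC]
  ring

theorem ellipsePt_mem_sphere_of_mul_eq_one {o : EuclideanSpace ℝ (Fin 2)} {ρ : ℝ}
    {z₁ z₂ z₃ w : ℂ}
    (hz₁ : ‖z₁‖ = 1) (hz₂ : ‖z₂‖ = 1) (hz₃ : ‖z₃‖ = 1)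
    (h₁₂ : z₁ ≠ z₂) (h₁₃ : z₁ ≠ z₃) (h₂₃ : z₂ ≠ z₃) (hw : z₁ * z₂ * z₃ * w = 1)
    (hs₁ : ellipsePt z₁ ∈ sphere o ρ) (hs₂ : ellipsePt z₂ ∈ sphere o ρ)
    (hs₃ : ellipsePt z₃ ∈ sphere o ρ) :
    ellipsePt w ∈ sphere o ρ := by
  obtain ⟨c₁, c₂, c₃, h⟩ := exists_quartic_iff_dist_ellipsePt_sq o (ρ ^ 2)
  have hw_norm : ‖w‖ = 1 := by simpa [hz₁, hz₂, hz₃] using congrArg norm hw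
  have hρ : 0 ≤ ρ := mem_sphere.mp hs₁ ▸ dist_nonneg
  have root {z : ℂ} (hz : ‖z‖ = 1) (hs : ellipsePt z ∈ sphere o ρ) :=
    (h z hz).mp (by rw [mem_sphere.mp hs])
  rw [mem_sphere, ← sq_eq_sq₀ dist_nonneg hρ, h w hw_norm]
  exact quartic_eq_zero_of_three_roots_of_mul_eq_one h₁₂ h₁₃ h₂₃
    (root hz₁ hs₁) (root hz₂ hs₂) (root hz₃ hs₃) hw

theorem disjoint_image_ellipsePt_setOf_pow_eq_neg {m : ℕ} {T : ℂ} (hT : T ≠ 0) :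
    Disjoint (ellipsePt '' {z | z ^ m = T}) (ellipsePt '' {z | z ^ m = -T}) := by
  rw [disjoint_image_iff ellipsePt_injective, Set.disjoint_left]
  intro z (hz : z ^ m = T) (hz' : z ^ m = -T)
  exact hT (by linear_combination (hz' - hz) / 2)

theorem inter_sphere_not_subset_of_three_le_ncard {m : ℕ} (hm : m ≠ 0) {T : ℂ} (hT : T ^ 4 = -1)
    {o : EuclideanSpace ℝ (Fin 2)} {ρ : ℝ}
    (h3 : 3 ≤ ((ellipsePt '' {z | z ^ m = T} ∪ ellipsePt '' {z | z ^ m = -T}) ∩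
      sphere o ρ).ncard) :
    ¬ (ellipsePt '' {z | z ^ m = T} ∪ ellipsePt '' {z | z ^ m = -T}) ∩ sphere o ρ ⊆
      ellipsePt '' {z | z ^ m = T} := by
  intro hsub
  have hT0 : T ≠ 0 := by rintro rfl; norm_num at hT
  have norm_eq_one {z : ℂ} (hz : z ^ m = T) : ‖z‖ = 1 :=
    norm_eq_one_of_pow_eq_one (n := m * (4 * 2))
      (by rw [pow_mul, hz, pow_mul, hT]; norm_num) (by omega)
  obtain ⟨p₁, p₂, p₃, hp₁, hp₂, hp₃, h₁₂, h₁₃, h₂₃⟩ :=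
    (two_lt_ncard_iff (finite_of_ncard_pos (by omega : 0 < _))).mp h3
  obtain ⟨z₁, hz₁ : z₁ ^ m = T, rfl⟩ := hsub hp₁
  obtain ⟨z₂, hz₂ : z₂ ^ m = T, rfl⟩ := hsub hp₂
  obtain ⟨z₃, hz₃ : z₃ ^ m = T, rfl⟩ := hsub hp₃
  have hw : z₁ * z₂ * z₃ * (z₁ * z₂ * z₃)⁻¹ = 1 :=
    mul_inv_cancel₀ (by
      simp [← norm_ne_zero_iff, norm_eq_one hz₁, norm_eq_one hz₂, norm_eq_one hz₃])
  have hwm : ((z₁ * z₂ * z₃)⁻¹) ^ m = -T := by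
    rw [inv_pow, mul_pow, mul_pow, hz₁, hz₂, hz₃, inv_eq_of_mul_eq_one_right]
    linear_combination -hT
  have hs := ellipsePt_mem_sphere_of_mul_eq_one
    (norm_eq_one hz₁) (norm_eq_one hz₂) (norm_eq_one hz₃)
    (ne_of_apply_ne _ h₁₂) (ne_of_apply_ne _ h₁₃) (ne_of_apply_ne _ h₂₃) hw hp₁.2 hp₂.2 hp₃.2
  exact disjoint_left.mp (disjoint_image_ellipsePt_setOf_pow_eq_neg hT0)
    (hsub ⟨Or.inr ⟨_, hwm, rfl⟩, hs⟩) ⟨_, hwm, rfl⟩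

theorem exp_two_pi_mul_div_add_mul_I (m k : ℕ) (φ : ℝ) :
    exp ((2 * π * k / m + φ : ℝ) * I) = exp (2 * π * I / m) ^ k * exp (φ * I) := by
  rw [← exp_nat_mul, ← exp_add]
  congr 1
  push_cast
  ring

theorem setOf_pow_eq_exp_mul_I {m : ℕ} (hm : m ≠ 0) (φ : ℝ) :
    {z : ℂ | z ^ m = exp (m * φ * I)} =
      (fun k : ℕ => exp ((2 * π * k / m + φ : ℝ) * I)) '' Iio m := by
  have : NeZero m := ⟨hm⟩
  ext z
  constructor
  · intro (hz : z ^ m = exp (m * φ * I))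
    have h1 : (z * exp (-φ * I)) ^ m = 1 := by
      rw [mul_pow, hz, ← exp_nat_mul, ← exp_add]
      convert exp_zero using 2
      ring
    obtain ⟨k, hk, hζ⟩ := (isPrimitiveRoot_exp m hm).eq_pow_of_pow_eq_one h1
    refine ⟨k, hk, ?_⟩
    dsimp only
    rw [exp_two_pi_mul_div_add_mul_I, hζ, mul_assoc, ← exp_add]
    simp
  · rintro ⟨k, -, rfl⟩
    show exp _ ^ m = _
    rw [exp_two_pi_mul_div_add_mul_I, mul_pow, ← pow_mul, mul_comm k, pow_mul,
      (isPrimitiveRoot_exp m hm).pow_eq_one, one_pow, one_mul, ← exp_nat_mul]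
    ring_nf

theorem image_ellipsePt_setOf_pow_eq_exp_mul_I {m : ℕ} (hm : m ≠ 0) (φ : ℝ) :
    ellipsePt '' {z : ℂ | z ^ m = exp (m * φ * I)} =
      (fun k : ℕ => planePt (Real.cos (2 * π * k / m + φ)) (2 * Real.sin (2 * π * k / m + φ)))
        '' Iio m := by
  rw [setOf_pow_eq_exp_mul_I hm, image_image]
  simp only [ellipsePt_exp_mul_I]

theorem exp_mul_add_pi_mul_I {m : ℕ} (hm : Odd m) (φ : ℝ) :
    exp (m * (φ + π : ℝ) * I) = -exp (m * φ * I) := by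
  rw [show (m * (φ + π : ℝ) * I : ℂ) = m * φ * I + m * (π * I) by push_cast; ring, exp_add,
    exp_nat_mul, exp_pi_mul_I, hm.neg_one_pow, mul_neg_one]

theorem ellipse_no_monochromatic_circle_general (m : ℕ) (hodd : Odd m)
    (B R : Set (EuclideanSpace ℝ (Fin 2)))
    (hB : B = (fun k : ℕ =>
      planePt (Real.cos (2 * Real.pi * k / m - Real.pi / 4))
              (2 * Real.sin (2 * Real.pi * k / m - Real.pi / 4))) '' Set.Iio m)
    (hR : R = (fun k : ℕ =>
      planePt (Real.cos (2 * Real.pi * k / m + 3 * Real.pi / 4))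
              (2 * Real.sin (2 * Real.pi * k / m + 3 * Real.pi / 4))) '' Set.Iio m) :
    Disjoint B R ∧
      ¬ ∃ (o : EuclideanSpace ℝ (Fin 2)) (ρ : ℝ), 0 < ρ ∧
          3 ≤ ((B ∪ R) ∩ Metric.sphere o ρ).ncard ∧
          (((B ∪ R) ∩ Metric.sphere o ρ) ⊆ B ∨ ((B ∪ R) ∩ Metric.sphere o ρ) ⊆ R) := by
  have hm : m ≠ 0 := hodd.pos.ne'
  set T := exp (m * (-(π / 4) : ℝ) * I)
  have hT : T ^ 4 = -1 := by
    have h := exp_mul_add_pi_mul_I hodd (-π)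
    rw [neg_add_cancel, ofReal_zero, mul_zero, zero_mul, exp_zero] at h
    rw [← exp_nat_mul, neg_eq_iff_eq_neg.mpr h]
    push_cast
    ring_nf
  have hB' : B = ellipsePt '' {z | z ^ m = T} := by
    rw [image_ellipsePt_setOf_pow_eq_exp_mul_I hm, hB]
    simp only [sub_eq_add_neg]
  have hR' : R = ellipsePt '' {z | z ^ m = -T} := by
    rw [← exp_mul_add_pi_mul_I hodd, image_ellipsePt_setOf_pow_eq_exp_mul_I hm, hR]
    simp only [show 3 * π / 4 = -(π / 4) + π by ring]
  subst hB' hR'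
  refine ⟨disjoint_image_ellipsePt_setOf_pow_eq_neg (exp_ne_zero _), ?_⟩
  rintro ⟨o, ρ, -, h3, hsub | hsub⟩
  · exact inter_sphere_not_subset_of_three_le_ncard hm hT h3 hsub
  · have hT' : (-T) ^ 4 = -1 := by rw [Even.neg_pow (by decide), hT]
    have h := inter_sphere_not_subset_of_three_le_ncard hm hT' (o := o) (ρ := ρ)
    rw [neg_neg, union_comm] at h
    exact h h3 hsub

/-- For odd `m ≥ 3`, the `m` blue points
`(cos(2πk/m − π/4), 2·sin(2πk/m − π/4))` and the `m` red points
`(cos(2πk/m + 3π/4), 2·sin(2πk/m + 3π/4))` (for `k = 0, …, m−1`), all lying on the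
ellipse `x² + 4y² = 1`, are disjoint, and no circle contains at least three of these
points with all the points of `B ∪ R` on the circle having the same color. -/
theorem ellipse_no_monochromatic_circle (m : ℕ) (hm : 3 ≤ m) (hodd : Odd m)
    (B R : Set (EuclideanSpace ℝ (Fin 2)))
    (hB : B = (fun k : ℕ =>
      planePt (Real.cos (2 * Real.pi * k / m - Real.pi / 4))
              (2 * Real.sin (2 * Real.pi * k / m - Real.pi / 4))) '' Set.Iio m)
    (hR : R = (fun k : ℕ =>
      planePt (Real.cos (2 * Real.pi * k / m + 3 * Real.pi / 4))
              (2 * Real.sin (2 * Real.pi * k / m + 3 * Real.pi / 4))) '' Set.Iio m) :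
    Disjoint B R ∧
      ¬ ∃ (o : EuclideanSpace ℝ (Fin 2)) (ρ : ℝ), 0 < ρ ∧
          3 ≤ ((B ∪ R) ∩ Metric.sphere o ρ).ncard ∧
          (((B ∪ R) ∩ Metric.sphere o ρ) ⊆ B ∨ ((B ∪ R) ∩ Metric.sphere o ρ) ⊆ R) :=
  ellipse_no_monochromatic_circle_general m hodd B R hB hR
end
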